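/- Let 1 ≤ k ≤ n−1, let J be a frozen k-element subset of {1,…,n}, and let s ∈ K_{k,n}. Then η_J(s) = 0, i.e. Σ_I s_I ρ_J(e_I) = 0, where the sum is over all k-element subsets I of {1,…,n}. (The planar basis elements indexed by frozen vertices vanish identically on the kinematic space.) -/

import Mathlib

open Finset

/-- Cyclic successor in `Fin n` (so the index after `n` is `1`). -/
def csucc {n : ℕ} (x : Fin n) : Fin n :=
  ⟨(x.val + 1) % n, Nat.mod_lt _ (Nat.lt_of_le_of_lt (Nat.zero_le _) x.isLt)⟩

/-- The linear functional `L_j(x) = Σ_{r=1}^{n−1} r·x_{j+r}` (subscripts mod `n`). -/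
def Lfun {n : ℕ} (j : Fin n) (x : Fin n → ℝ) : ℝ :=
  ∑ r : Fin n, (r.val : ℝ) * x (j + r)

/-- `h(x) = min_{1 ≤ j ≤ n} L_j(x)`. -/
noncomputable def hfun {n : ℕ} (x : Fin n → ℝ) : ℝ :=
  sInf (Set.range fun j : Fin n => Lfun j x)

/-- `e_S = Σ_{j ∈ S} e_j`, the indicator vector of a subset `S ⊆ {1,…,n}`. -/
def ind {n : ℕ} (S : Finset (Fin n)) : Fin n → ℝ := fun i => if i ∈ S then 1 else 0

/-- `ρ_J(x) = h(x − e_J)`. -/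
noncomputable def rho {n : ℕ} (J : Finset (Fin n)) (x : Fin n → ℝ) : ℝ :=
  hfun (x - ind J)

/-!
For the frozen set `J = {i, …, i + k - 1}` the minimum defining `ρ_J(e_I)` is attained at
`j₀ = i + k` for every `k`-set `I`: moving the base point from `j₀` to `j₀ + d` changes
`L(e_S)` by `#S · d - n · #{a ∈ S | a - j₀ < d}`, and no `k`-set has fewer points among the
first `d` positions after `j₀` than `J`, which occupies the last `k`. Hence on `k`-sets
`ρ_J(e_I) = Σ_{a ∈ I} w a - C` is affine, and such functions pair to zero with the kinematic
space: `Σ_I s_I Σ_{a ∈ I} w a = Σ_a w a Σ_{I ∋ a} s_I = 0`, and `Σ_I s_I = 0` is the case `w = 1`.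
-/

section Kinematic

variable {α : Type*} [Fintype α] [DecidableEq α] {P : Finset (Finset α)} {s : Finset α → ℝ}

theorem sum_mul_sum_eq_zero_of_sum_filter_mem_eq_zero
    (hs : ∀ a, ∑ I ∈ P.filter (fun I => a ∈ I), s I = 0) (w : α → ℝ) :
    ∑ I ∈ P, s I * ∑ a ∈ I, w a = 0 := by
  calc ∑ I ∈ P, s I * ∑ a ∈ I, w a = ∑ I ∈ P, ∑ a, if a ∈ I then s I * w a else 0 := by
        simp_rw [mul_sum, sum_ite_mem, univ_inter]
    _ = ∑ a, (∑ I ∈ P.filter (fun I => a ∈ I), s I) * w a := by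
        rw [sum_comm]; simp_rw [sum_mul, sum_filter]
    _ = 0 := by simp [hs]

theorem sum_eq_zero_of_sum_filter_mem_eq_zero {k : ℕ} (hk : k ≠ 0)
    (hs : ∀ a, ∑ I ∈ (powersetCard k (univ : Finset α)).filter (fun I => a ∈ I), s I = 0) :
    ∑ I ∈ powersetCard k (univ : Finset α), s I = 0 := by
  have h := sum_mul_sum_eq_zero_of_sum_filter_mem_eq_zero hs (fun _ => 1)
  rw [sum_congr rfl fun I hI => by rw [sum_const, mem_powersetCard_univ.mp hI], ← sum_mul] at h
  simpa [hk] using h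

end Kinematic

namespace Fin

theorem cast_val_sub_sub_cast_val_sub {n : ℕ} [NeZero n] (a b c : Fin n) :
    ((a - b).val : ℝ) - (a - c).val
      = (c - b).val - if (a - b).val < (c - b).val then (n : ℝ) else 0 := by
  have h : ((a - b).val : ℤ) - (a - c).val
      = (c - b).val - if (a - b).val < (c - b).val then (n : ℤ) else 0 := by
    split <;> fin_omega
  exact_mod_cast h

end Fin

def cyclicInterval {n : ℕ} (i : Fin n) (k : ℕ) : Finset (Fin n) :=
  univ.filter fun x => (x - i).val < k

section Tropical

variable {n : ℕ}

theorem Lfun_sub (j : Fin n) (x y : Fin n → ℝ) : Lfun j (x - y) = Lfun j x - Lfun j y := by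
  simp only [Lfun, Pi.sub_apply, mul_sub, sum_sub_distrib]

theorem Lfun_ind [NeZero n] (j : Fin n) (S : Finset (Fin n)) :
    Lfun j (ind S) = ∑ a ∈ S, ((a - j).val : ℝ) := by
  rw [Lfun, ← univ_inter S, ← sum_ite_mem]
  exact Fintype.sum_equiv (Equiv.addLeft j) _ _ fun r => by simp [ind]

theorem hfun_eq_Lfun_of_forall_le (x : Fin n → ℝ) (j₀ : Fin n) (h : ∀ j, Lfun j₀ x ≤ Lfun j x) :
    hfun x = Lfun j₀ x :=
  IsLeast.csInf_eq ⟨⟨j₀, rfl⟩, by rintro _ ⟨j, rfl⟩; exact h j⟩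

theorem Lfun_ind_sub_Lfun_ind [NeZero n] (S : Finset (Fin n)) (b c : Fin n) :
    Lfun b (ind S) - Lfun c (ind S)
      = #S * ((c - b).val : ℝ) - n * #{a ∈ S | (a - b).val < (c - b).val} := by
  rw [Lfun_ind, Lfun_ind, ← sum_sub_distrib,
    sum_congr rfl fun a _ => Fin.cast_val_sub_sub_cast_val_sub a b c, sum_sub_distrib,
    ← sum_filter, sum_const, sum_const, nsmul_eq_mul, nsmul_eq_mul, mul_comm (n : ℝ)]

theorem card_le_card_filter_val_sub_lt_add [NeZero n] (S : Finset (Fin n)) (b : Fin n) (t : ℕ) :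
    #S ≤ #{a ∈ S | (a - b).val < t} + (n - t) := by
  have h : #{a ∈ S | ¬ (a - b).val < t} ≤ #(Ico t n) := by
    refine card_le_card_of_injOn (fun a => (a - b).val) (fun a ha => ?_)
      (fun a _ a' _ h => sub_left_injective (Fin.val_injective h))
    simp only [coe_filter, Set.mem_ofPred_eq, coe_Ico, Set.mem_Ico] at ha ⊢
    exact ⟨not_lt.mp ha.2, (a - b).isLt⟩
  rw [Nat.card_Ico] at h
  have := card_filter_add_card_filter_not (s := S) (fun a => (a - b).val < t)
  omega

theorem card_filter_cyclicInterval_le [NeZero n] {k : ℕ} (hk : k < n) (i : Fin n) (t : ℕ) :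
    #{a ∈ cyclicInterval i k | (a - (i + ⟨k, hk⟩)).val < t} ≤ t - (n - k) := by
  rw [← Nat.card_Ico]
  refine card_le_card_of_injOn (fun a => (a - (i + ⟨k, hk⟩)).val) (fun a ha => ?_)
    (fun a _ a' _ h => sub_left_injective (Fin.val_injective h))
  simp only [cyclicInterval, coe_filter, mem_filter, mem_univ, true_and, Set.mem_ofPred_eq,
    coe_Ico, Set.mem_Ico] at ha ⊢
  obtain ⟨ha, hat⟩ := ha
  have : (⟨k, hk⟩ : Fin n).val = k := rfl
  exact ⟨by fin_omega, hat⟩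

theorem Lfun_cyclicInterval_le [NeZero n] {k : ℕ} (hk : k < n) (i : Fin n)
    (hJ : #(cyclicInterval i k) = k) {I : Finset (Fin n)} (hI : #I = k) (j : Fin n) :
    Lfun (i + ⟨k, hk⟩) (ind I - ind (cyclicInterval i k))
      ≤ Lfun j (ind I - ind (cyclicInterval i k)) := by
  have hJt := card_filter_cyclicInterval_le hk i (j - (i + ⟨k, hk⟩)).val
  set J := cyclicInterval i k
  set j₀ : Fin n := i + ⟨k, hk⟩
  have hcount :
      #{a ∈ J | (a - j₀).val < (j - j₀).val} ≤ #{a ∈ I | (a - j₀).val < (j - j₀).val} := by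
    have := card_le_card_filter_val_sub_lt_add I j₀ (j - j₀).val
    have := (j - j₀).isLt
    omega
  have hcount' : (n : ℝ) * #{a ∈ J | (a - j₀).val < (j - j₀).val}
      ≤ n * #{a ∈ I | (a - j₀).val < (j - j₀).val} := by gcongr
  have hIJ := Lfun_ind_sub_Lfun_ind I j₀ j
  have hJJ := Lfun_ind_sub_Lfun_ind J j₀ j
  rw [hI] at hIJ
  rw [hJ] at hJJ
  rw [Lfun_sub, Lfun_sub]
  linarith

theorem rho_cyclicInterval_ind [NeZero n] {k : ℕ} (hk : k < n) (i : Fin n)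
    (hJ : #(cyclicInterval i k) = k) {I : Finset (Fin n)} (hI : #I = k) :
    rho (cyclicInterval i k) (ind I)
      = ∑ a ∈ I, ((a - (i + ⟨k, hk⟩)).val : ℝ)
        - ∑ a ∈ cyclicInterval i k, ((a - (i + ⟨k, hk⟩)).val : ℝ) := by
  rw [rho, hfun_eq_Lfun_of_forall_le _ _ (Lfun_cyclicInterval_le hk i hJ hI), Lfun_sub,
    Lfun_ind, Lfun_ind]

end Tropical

/-- if `J` is a frozen `k`-subset and `s` lies in the kinematic
space `K_{k,n}` (i.e. `Σ_{J ∋ a} s_J = 0` for all `a`), then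
`η_J(s) = 0`, i.e. `Σ_I s_I ρ_J(e_I) = 0` (sum over all `k`-subsets `I`). -/
theorem stmt6 {n k : ℕ} (hk1 : 1 ≤ k) (hk2 : k ≤ n - 1)
    (J : Finset (Fin n)) (hJcard : J.card = k)
    (hJfrozen : ∃ i : Fin n, J = univ.filter fun x => (x - i).val < k)
    (s : Finset (Fin n) → ℝ)
    (hs : ∀ a : Fin n,
      ∑ I ∈ (powersetCard k (univ : Finset (Fin n))).filter (fun I => a ∈ I), s I = 0) :
    ∑ I ∈ powersetCard k (univ : Finset (Fin n)), s I * rho J (ind I) = 0 := by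
  obtain ⟨i, hJ⟩ := hJfrozen
  rw [show J = cyclicInterval i k from hJ] at hJcard ⊢
  have hk : k < n := by omega
  have : NeZero n := ⟨by omega⟩
  rw [sum_congr rfl fun I hI => by
      rw [rho_cyclicInterval_ind hk i hJcard (mem_powersetCard_univ.mp hI), mul_sub],
    sum_sub_distrib, sum_mul_sum_eq_zero_of_sum_filter_mem_eq_zero hs, ← sum_mul,
    sum_eq_zero_of_sum_filter_mem_eq_zero (by omega) hs, zero_mul, sub_zero]
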